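/- For n ≥ 2, the minimum δ(n) of 1 - 1/p_1 - ... - 1/p_n over collections of n distinct primes with positive value is attained, i.e., the infimum is achieved by some collection of n distinct primes. -/

import Mathlib

/-!
Summing `n` elements of a partially well-ordered subset of an ordered cancellative monoid stays
partially well-ordered, and `{-1/p : p ≥ 1}` is partially well-ordered because `p ↦ -1/p` is
monotone. Hence the values `1 - ∑ 1/p` over `n` distinct primes form a well-founded subset of `ℝ`,
so its positive part, which is nonempty (take `n` primes larger than `n`), has a least element.
-/

/-- `delta n` is the infimum of the positive values `1 - 1/p₁ - ⋯ - 1/pₙ`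
over all collections of `n` distinct primes `p₁, …, pₙ`. -/
noncomputable def delta (n : ℕ) : ℝ :=
  sInf {x : ℝ | 0 < x ∧ ∃ s : Finset ℕ, s.card = n ∧ (∀ p ∈ s, p.Prime) ∧
    x = 1 - ∑ p ∈ s, (1 : ℝ) / p}

open scoped Pointwise

theorem Set.IsPWO.nsmul {α : Type*} [AddCommMonoid α] [PartialOrder α]
    [IsOrderedCancelAddMonoid α] {s : Set α} (hs : s.IsPWO) : ∀ n : ℕ, (n • s).IsPWO
  | 0 => by rw [zero_nsmul]; exact Set.isPWO_singleton 0
  | n + 1 => by simpa only [succ_nsmul] using (hs.nsmul n).add hs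

theorem isPWO_image_neg_inv_natCast {S : Set ℕ} (hS : ∀ p ∈ S, 0 < p) :
    ((fun p : ℕ => -(p : ℝ)⁻¹) '' S).IsPWO :=
  (Set.isPWO_of_wellQuasiOrderedLE S).image_of_monotoneOn fun p hp _ _ hpq =>
    neg_le_neg <| inv_anti₀ (by exact_mod_cast hS p hp) (by exact_mod_cast hpq)

theorem isPWO_setOf_sub_sum_one_div (t : ℝ) (n : ℕ) {S : Set ℕ} (hS : ∀ p ∈ S, 0 < p) :
    {x : ℝ | ∃ s : Finset ℕ, s.card = n ∧ (∀ p ∈ s, p ∈ S) ∧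
      x = t - ∑ p ∈ s, (1 : ℝ) / p}.IsPWO := by
  set R := (fun p : ℕ => -(p : ℝ)⁻¹) '' S
  refine ((Set.isPWO_singleton t).add ((isPWO_image_neg_inv_natCast hS).nsmul n)).mono ?_
  rintro _ ⟨s, rfl, hsS, rfl⟩
  have hsum : ∑ p ∈ s, -(p : ℝ)⁻¹ ∈ s.card • R := by
    simpa only [Finset.sum_const] using
      Set.finsetSum_mem_finsetSum s (fun _ => R) _ fun p hp => ⟨p, hsS p hp, rfl⟩
  have hvalue : t - ∑ p ∈ s, (1 : ℝ) / p = t + ∑ p ∈ s, -(p : ℝ)⁻¹ := by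
    simp only [one_div, Finset.sum_neg_distrib, sub_eq_add_neg]
  exact hvalue ▸ Set.add_mem_add (Set.mem_singleton t) hsum

theorem exists_primes_sum_one_div_lt_one (n : ℕ) :
    ∃ s : Finset ℕ, s.card = n ∧ (∀ p ∈ s, p.Prime) ∧ ∑ p ∈ s, (1 : ℝ) / p < 1 := by
  obtain ⟨s, hsub, hcard⟩ :=
    (Nat.infinite_setOfPred_prime.sdiff (Set.finite_Iic n)).exists_subset_card_eq n
  have hlarge : ∀ p ∈ s, p.Prime ∧ n < p := fun p hp => by simpa using hsub hp
  refine ⟨s, hcard, fun p hp => (hlarge p hp).1, ?_⟩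
  calc ∑ p ∈ s, (1 : ℝ) / p ≤ s.card • (1 / ((n : ℝ) + 1)) := by
        refine Finset.sum_le_card_nsmul s _ _ fun p hp => ?_
        gcongr
        exact_mod_cast (hlarge p hp).2
    _ = n / (n + 1) := by rw [hcard, nsmul_eq_mul]; ring
    _ < 1 := (div_lt_one (by positivity)).2 (lt_add_one _)

theorem stmt_5_general (n : ℕ) :
    0 < delta n ∧ ∃ s : Finset ℕ, s.card = n ∧ (∀ p ∈ s, p.Prime) ∧
      1 - ∑ p ∈ s, (1 : ℝ) / p = delta n := by
  set X := {x : ℝ | 0 < x ∧ ∃ s : Finset ℕ, s.card = n ∧ (∀ p ∈ s, p.Prime) ∧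
    x = 1 - ∑ p ∈ s, (1 : ℝ) / p}
  have hwf : X.IsWF := ((isPWO_setOf_sub_sum_one_div 1 n (S := {p | p.Prime})
    fun p hp => hp.pos).mono fun _ hx => hx.2).isWF
  have hne : X.Nonempty := by
    obtain ⟨s, hcard, hprime, hlt⟩ := exists_primes_sum_one_div_lt_one n
    exact ⟨_, sub_pos.2 hlt, s, hcard, hprime, rfl⟩
  have hleast : IsLeast X (hwf.min hne) := ⟨hwf.min_mem hne, fun _ => hwf.min_le hne⟩
  have hdelta : delta n = hwf.min hne := hleast.csInf_eq
  obtain ⟨hpos, s, hcard, hprime, hs⟩ := hleast.1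
  exact ⟨hdelta ▸ hpos, s, hcard, hprime, by rw [hdelta, hs]⟩

/-- For `n ≥ 2`, the infimum `δ(n)` is positive and is attained by some
collection of `n` distinct primes. -/
theorem stmt_5 (n : ℕ) (hn : 2 ≤ n) :
    0 < delta n ∧ ∃ s : Finset ℕ, s.card = n ∧ (∀ p ∈ s, p.Prime) ∧
      1 - ∑ p ∈ s, (1 : ℝ) / p = delta n :=
  stmt_5_general n
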